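/- arXiv:2510.19601 — 2 statements merged into one kernel-verified Lean document; each statement's English description precedes it below -/
import Mathlib

section
/- For p ≥ 3, the complete multipartite graph K'_{2p} with p parts each of size two (the cocktail party graph) has exactly C(p,2) + 1 distinct lines. -/
open scoped Classical

namespace ChenChvatal

variable {V : Type*}

/-- `G` has diameter exactly two: some pair of distinct vertices is non-adjacent,
and any two distinct non-adjacent vertices have a common neighbor. -/
def DiamTwo (G : SimpleGraph V) : Prop :=
  (∃ x y : V, x ≠ y ∧ ¬ G.Adj x y) ∧
    ∀ x y : V, x ≠ y → ¬ G.Adj x y → ∃ z, G.Adj x z ∧ G.Adj z y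

/-- The line of a diameter-two graph defined by two vertices. -/
noncomputable def line (G : SimpleGraph V) (x y : V) : Set V :=
  if G.Adj x y then {x, y} ∪ symmDiff (G.neighborSet x) (G.neighborSet y)
  else {x, y} ∪ (G.neighborSet x ∩ G.neighborSet y)

/-- The set of all lines of a graph. -/
def lines (G : SimpleGraph V) : Set (Set V) :=
  {ℓ | ∃ x y : V, x ≠ y ∧ ℓ = line G x y}

/-- The set of non-neighbors of `x`, other than `x` itself. -/
def N2 (G : SimpleGraph V) (x : V) : Set V := {u | u ≠ x ∧ ¬ G.Adj x u}


/-- Two copies of `K_p` joined by a perfect matching. -/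
def M (p : ℕ) : SimpleGraph (Fin p ⊕ Fin p) where
  Adj u v :=
    match u, v with
    | Sum.inl i, Sum.inl j => i ≠ j
    | Sum.inr i, Sum.inr j => i ≠ j
    | Sum.inl i, Sum.inr j => i = j
    | Sum.inr i, Sum.inl j => i = j
  symm := ⟨by rintro (i | i) (j | j) h <;> exact h.symm⟩
  loopless := ⟨by rintro (i | i) h <;> exact h rfl⟩

/-- `K_{1,2,2}` minus an edge incident to the degree-four vertex `4`;
vertices `0,2` and `1,3` are the parts of size two. -/
def K122' : SimpleGraph (Fin 5) :=
  SimpleGraph.fromEdgeSet {s(0,1), s(0,3), s(2,1), s(2,3), s(2,4), s(1,4), s(3,4)}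

/-- The house graph: five-cycle `0 1 2 3 4` with the chord `{1,4}`. -/
def house : SimpleGraph (Fin 5) :=
  SimpleGraph.fromEdgeSet {s(0,1), s(1,2), s(2,3), s(3,4), s(4,0), s(1,4)}

/-- The non-neighbor ("mate") involution on `Fin q ⊕ Fin p × Fin 2`. -/
def mate (q p : ℕ) : (Fin q ⊕ Fin p × Fin 2) → (Fin q ⊕ Fin p × Fin 2)
  | Sum.inl j => Sum.inl j
  | Sum.inr (i, k) => Sum.inr (i, k + 1)

lemma mate_invol (q p : ℕ) : Function.Involutive (mate q p) := by
  rintro (j | ⟨i, k⟩)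
  · rfl
  · show Sum.inr (i, k + 1 + 1) = Sum.inr (i, k)
    have h : (1 : Fin 2) + 1 = 0 := rfl
    rw [add_assoc, h, add_zero]

/-- The complete multipartite graph with `q` parts of size one and `p` parts of size two. -/
def Kqp (q p : ℕ) : SimpleGraph (Fin q ⊕ Fin p × Fin 2) where
  Adj u v := u ≠ v ∧ v ≠ mate q p u
  symm := by
    constructor
    rintro u v ⟨h1, h2⟩
    refine ⟨h1.symm, fun h => h2 ?_⟩
    rw [h]
    exact (mate_invol q p v).symm
  loopless := ⟨fun u h => h.1 rfl⟩

/-! Every vertex of `Kqp 0 p` has exactly one non-neighbour, its mate. The line through a vertex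
and its mate is therefore the whole vertex set, while the line through two adjacent vertices
in parts `i ≠ j` is exactly the union of these two parts. So the lines are the vertex set and
the `C(p, 2)` unions of two parts, and these are pairwise distinct as soon as `p ≠ 2`. -/

lemma fin_two_eq_or_eq_add_one (k c : Fin 2) : c = k ∨ c = k + 1 := by
  revert k c; decide

section Kqp

variable {q p : ℕ}

def partUnion (q : ℕ) (s : Finset (Fin p)) : Set (Fin q ⊕ Fin p × Fin 2) :=
  Sum.inr '' (Prod.fst ⁻¹' s)

lemma partUnion_injective : Function.Injective (partUnion (p := p) q) :=
  (Set.image_injective.mpr Sum.inr_injective).comp <|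
    (Set.preimage_injective.mpr Prod.fst_surjective).comp Finset.coe_injective

lemma inr_mem_partUnion {s : Finset (Fin p)} {i : Fin p} {k : Fin 2} :
    (Sum.inr (i, k) : Fin q ⊕ Fin p × Fin 2) ∈ partUnion q s ↔ i ∈ s := by
  simp [partUnion]

lemma partUnion_zero_univ : partUnion 0 (Finset.univ : Finset (Fin p)) = Set.univ := by
  ext (j | ⟨i, k⟩)
  · exact j.elim0
  · simp [inr_mem_partUnion]

lemma line_Kqp_mate (u : Fin q ⊕ Fin p × Fin 2) : line (Kqp q p) u (mate q p u) = Set.univ := by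
  have hadj : ¬ (Kqp q p).Adj u (mate q p u) := fun h => h.2 rfl
  rw [line, if_neg hadj, Set.eq_univ_iff_forall]
  intro w
  by_cases hwu : w = u
  · exact Or.inl (Or.inl hwu)
  by_cases hwm : w = mate q p u
  · exact Or.inl (Or.inr hwm)
  · exact Or.inr ⟨⟨Ne.symm hwu, hwm⟩, ⟨Ne.symm hwm, by rwa [mate_invol]⟩⟩

/-- The neighbourhood of `u` is everything but `u` and `mate u`,
so `N(u) ∆ N(v) ⊆ {u, v, mate u, mate v}`. -/
lemma line_Kqp_of_adj {u v : Fin q ⊕ Fin p × Fin 2} (h : (Kqp q p).Adj u v) :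
    line (Kqp q p) u v = {u, v, mate q p u, mate q p v} := by
  have hmate := (mate_invol q p).injective
  rw [line, if_pos h]
  ext w
  simp only [Set.mem_union, Set.mem_insert_iff, Set.mem_singleton_iff, Set.mem_symmDiff,
    SimpleGraph.mem_neighborSet, Kqp]
  constructor
  · tauto
  · rintro (rfl | rfl | rfl | rfl)
    · tauto
    · tauto
    · exact Or.inr (Or.inr ⟨⟨h.2, fun he => h.1 (hmate he)⟩, by tauto⟩)
    · refine Or.inr (Or.inl ⟨⟨fun he => h.2 ?_, fun he => h.1 (hmate he).symm⟩, by tauto⟩)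
      rw [he, mate_invol]

lemma line_Kqp_zero_inr {i j : Fin p} (hij : i ≠ j) (k l : Fin 2) :
    line (Kqp 0 p) (Sum.inr (i, k)) (Sum.inr (j, l)) = partUnion 0 {i, j} := by
  have hadj : (Kqp 0 p).Adj (Sum.inr (i, k)) (Sum.inr (j, l)) :=
    ⟨by simp [hij], by simp [mate, hij.symm]⟩
  rw [line_Kqp_of_adj hadj]
  ext (m | ⟨m, c⟩)
  · exact m.elim0
  · simp only [mate, Set.mem_insert_iff, Set.mem_singleton_iff, Sum.inr.injEq, Prod.mk.injEq,
      inr_mem_partUnion, Finset.mem_insert, Finset.mem_singleton]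
    rcases fin_two_eq_or_eq_add_one k c with hk | hk <;>
      rcases fin_two_eq_or_eq_add_one l c with hl | hl <;> tauto

lemma lines_Kqp_zero (hp : 0 < p) :
    lines (Kqp 0 p) =
      partUnion 0 '' ↑(insert Finset.univ (Finset.univ.powersetCard 2) : Finset (Finset (Fin p))) := by
  ext ℓ
  simp only [lines, Set.mem_ofPred_eq, Set.mem_image, Finset.coe_insert, Set.mem_insert_iff,
    Finset.mem_coe, Finset.mem_powersetCard, Finset.subset_univ, true_and, Finset.card_eq_two]
  constructor
  · rintro ⟨(u | ⟨i, k⟩), (v | ⟨j, l⟩), huv, rfl⟩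
    · exact u.elim0
    · exact u.elim0
    · exact v.elim0
    by_cases hij : i = j
    · subst hij
      have hl := (fin_two_eq_or_eq_add_one k l).resolve_left fun h => huv (by rw [h])
      refine ⟨Finset.univ, Or.inl rfl, ?_⟩
      rw [partUnion_zero_univ, hl, ← mate, line_Kqp_mate]
    · exact ⟨{i, j}, Or.inr ⟨i, j, hij, rfl⟩, (line_Kqp_zero_inr hij k l).symm⟩
  · rintro ⟨s, rfl | ⟨i, j, hij, rfl⟩, rfl⟩
    · let u : Fin 0 ⊕ Fin p × Fin 2 := Sum.inr (⟨0, hp⟩, 0)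
      refine ⟨u, mate 0 p u, by simp [u, mate], ?_⟩
      rw [line_Kqp_mate, partUnion_zero_univ]
    · exact ⟨_, _, by simp [hij], (line_Kqp_zero_inr hij 0 0).symm⟩

end Kqp

/-- For `p ≥ 3`, the cocktail party graph `K'_{2p}` (the complete multipartite
graph with `p` parts of size two, here `Kqp 0 p`) has exactly `C(p,2) + 1` lines. -/
theorem stmt9 (p : ℕ) (hp : 3 ≤ p) :
    (lines (Kqp 0 p)).ncard = p.choose 2 + 1 := by
  have huniv : (Finset.univ : Finset (Fin p)) ∉ Finset.univ.powersetCard 2 := by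
    simp only [Finset.mem_powersetCard, Finset.card_univ, Fintype.card_fin]
    omega
  rw [lines_Kqp_zero (by omega), Set.ncard_image_of_injective _ partUnion_injective,
    Set.ncard_coe_finset, Finset.card_insert_of_notMem huniv, Finset.card_powersetCard,
    Finset.card_univ, Fintype.card_fin]

end ChenChvatal
end

section
/- Let G be the graph on vertex set {u_1,...,u_q} ∪ {v_1,v'_1,...,v_p,v'_p} (p ≥ 1) where all pairs are adjacent except each pair v_i, v'_i. If (p,q) ∉ {(1,1),(2,0)}, then G has exactly p(p−1)/2 + q(q−1)/2 + pq + 1 distinct lines. -/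
open scoped Classical

namespace ChenChvatal

variable {V : Type*}

/-!
`Kqp q p` is the complete multipartite graph `(⊤ : SimpleGraph W).comap π` whose parts are the
fibres of `π : V → W`, here the projection onto its `q + p` parts. In such a graph the line through
two adjacent vertices is the union of their two parts, since `N(x) Δ N(y)` is exactly that union.
The line through two non-adjacent vertices is `{x, y}` together with everything outside
their common part, so when every part has at most two vertices it is the whole vertex set. The
lines are therefore `V` together with the unions of two distinct parts. When `q + p ≠ 2` these are
pairwise distinct, so there are `(q + p).choose 2 + 1` of them.
-/

section CompleteMultipartite

variable {V W : Type*} (π : V → W)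

lemma neighborSet_comap_top (x : V) :
    ((⊤ : SimpleGraph W).comap π).neighborSet x = (π ⁻¹' {π x})ᶜ := by
  ext z
  simp [eq_comm]

lemma line_comap_top_of_ne {x y : V} (h : π x ≠ π y) :
    line ((⊤ : SimpleGraph W).comap π) x y = π ⁻¹' {π x, π y} := by
  have hadj : ((⊤ : SimpleGraph W).comap π).Adj x y := h
  rw [line, if_pos hadj, neighborSet_comap_top, neighborSet_comap_top, compl_symmDiff_compl]
  ext z
  simp only [Set.mem_union, Set.mem_insert_iff, Set.mem_singleton_iff, Set.mem_symmDiff,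
    Set.mem_preimage]
  grind

lemma line_comap_top_of_fiber_eq_pair {x y : V} (h : π ⁻¹' {π x} = {x, y}) :
    line ((⊤ : SimpleGraph W).comap π) x y = Set.univ := by
  have hxy : π y = π x := by simpa using h.ge (Set.mem_insert_of_mem x rfl)
  have hnadj : ¬ ((⊤ : SimpleGraph W).comap π).Adj x y := by simp [hxy]
  rw [line, if_neg hnadj, neighborSet_comap_top, neighborSet_comap_top, hxy, Set.inter_self,
    h, Set.union_compl_self]

variable {π}

lemma lines_comap_top (hπ : Function.Surjective π)
    (hfiber : ∀ x y, x ≠ y → π x = π y → π ⁻¹' {π x} = {x, y})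
    (hpair : ∃ x y, x ≠ y ∧ π x = π y) :
    lines ((⊤ : SimpleGraph W).comap π)
      = insert Set.univ ((fun t : Finset W => π ⁻¹' t) '' {t | t.card = 2}) := by
  ext ℓ
  constructor
  · rintro ⟨x, y, hxy, rfl⟩
    by_cases h : π x = π y
    · exact Or.inl (line_comap_top_of_fiber_eq_pair π (hfiber x y hxy h))
    · refine Or.inr ⟨{π x, π y}, Finset.card_pair h, ?_⟩
      simp [line_comap_top_of_ne π h]
  · rintro (rfl | ⟨t, ht, rfl⟩)
    · obtain ⟨x, y, hxy, h⟩ := hpair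
      exact ⟨x, y, hxy, (line_comap_top_of_fiber_eq_pair π (hfiber x y hxy h)).symm⟩
    · obtain ⟨a, b, hab, rfl⟩ := Finset.card_eq_two.mp ht
      obtain ⟨x, rfl⟩ := hπ a
      obtain ⟨y, rfl⟩ := hπ b
      refine ⟨x, y, fun h => hab (congrArg π h), ?_⟩
      simp [line_comap_top_of_ne π hab]

lemma ncard_setOf_finset_card_eq [Finite W] (k : ℕ) :
    {t : Finset W | t.card = k}.ncard = (Nat.card W).choose k := by
  have := Fintype.ofFinite W
  have hset : {t : Finset W | t.card = k} = ↑(Finset.powersetCard k (Finset.univ : Finset W)) := by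
    ext t
    simp
  rw [hset, Set.ncard_coe_finset, Finset.card_powersetCard, Finset.card_univ,
    Nat.card_eq_fintype_card]

lemma ncard_lines_comap_top [Finite W] (hπ : Function.Surjective π)
    (hfiber : ∀ x y, x ≠ y → π x = π y → π ⁻¹' {π x} = {x, y})
    (hpair : ∃ x y, x ≠ y ∧ π x = π y) (hW : Nat.card W ≠ 2) :
    (lines ((⊤ : SimpleGraph W).comap π)).ncard = (Nat.card W).choose 2 + 1 := by
  have hinj : Function.Injective (fun t : Finset W => π ⁻¹' t) :=
    fun s t h => Finset.coe_injective (hπ.preimage_injective h)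
  have huniv : Set.univ ∉ (fun t : Finset W => π ⁻¹' t) '' {t | t.card = 2} := by
    rintro ⟨t, (ht : t.card = 2), htuniv⟩
    have := Fintype.ofFinite W
    have htop : t = Finset.univ := by
      refine Finset.eq_univ_of_forall fun w => ?_
      obtain ⟨v, rfl⟩ := hπ w
      exact (htuniv.ge (Set.mem_univ v) : π v ∈ t)
    rw [htop, Finset.card_univ, ← Nat.card_eq_fintype_card] at ht
    exact hW ht
  rw [lines_comap_top hπ hfiber hpair, Set.ncard_insert_of_notMem huniv,
    Set.ncard_image_of_injective _ hinj, ncard_setOf_finset_card_eq]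

end CompleteMultipartite

lemma _root_.Nat.choose_two_add (m n : ℕ) : (m + n).choose 2 = m.choose 2 + m * n + n.choose 2 := by
  rw [Nat.add_choose_eq, Finset.Nat.sum_antidiagonal_eq_sum_range_succ_mk]
  simp only [Finset.sum_range_succ, Finset.sum_range_zero, Nat.choose_zero_right,
    Nat.choose_one_right, Nat.reduceSub]
  ring

def part (q p : ℕ) : Fin q ⊕ Fin p × Fin 2 → Fin q ⊕ Fin p := Sum.map id Prod.fst

lemma part_surjective (q p : ℕ) : Function.Surjective (part q p) :=
  Function.surjective_id.sumMap Prod.fst_surjective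

lemma part_eq_part_iff {q p : ℕ} {x y : Fin q ⊕ Fin p × Fin 2} :
    part q p y = part q p x ↔ y = x ∨ y = mate q p x := by
  rcases x with j | ⟨i, k⟩ <;> rcases y with j' | ⟨i', k'⟩ <;> simp [part, mate]
  omega

lemma Kqp_eq_comap_part (q p : ℕ) : Kqp q p = (⊤ : SimpleGraph _).comap (part q p) := by
  ext x y
  rw [SimpleGraph.comap_adj, SimpleGraph.top_adj, ne_comm, Ne, part_eq_part_iff, not_or]
  exact and_congr_left' ne_comm

lemma preimage_part_eq_pair {q p : ℕ} {x y : Fin q ⊕ Fin p × Fin 2} (hxy : x ≠ y)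
    (h : part q p x = part q p y) : part q p ⁻¹' {part q p x} = {x, y} := by
  have hy : y = mate q p x := (part_eq_part_iff.mp h.symm).resolve_left hxy.symm
  ext z
  simp [part_eq_part_iff, hy]

/-- The complete multipartite graph with `q` parts of size one and `p ≥ 1`
parts of size two has exactly `p(p-1)/2 + q(q-1)/2 + pq + 1` lines,
provided `(p,q) ∉ {(1,1),(2,0)}`. -/
theorem stmt12 (p q : ℕ) (hp : 1 ≤ p)
    (h1 : ¬(p = 1 ∧ q = 1)) (h2 : ¬(p = 2 ∧ q = 0)) :
    (lines (Kqp q p)).ncard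
      = p * (p - 1) / 2 + q * (q - 1) / 2 + p * q + 1 := by
  have hpair : ∃ x y : Fin q ⊕ Fin p × Fin 2, x ≠ y ∧ part q p x = part q p y :=
    ⟨.inr (⟨0, hp⟩, 0), .inr (⟨0, hp⟩, 1), by simp, rfl⟩
  have hcard : Nat.card (Fin q ⊕ Fin p) = q + p := by simp
  rw [Kqp_eq_comap_part, ncard_lines_comap_top (part_surjective q p)
    (fun _ _ => preimage_part_eq_pair) hpair (by omega), hcard, Nat.choose_two_add,
    Nat.choose_two_right, Nat.choose_two_right]
  ring

end ChenChvatal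
end
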